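/- Define f_{b,c}(X,Y,Z) = b x₁z₁ X Z + y₁ Y (c − Z) and G = f_{b,a}(X,Y,X) f_{b,c}(X,Y,Z) + f_{b,0}(X,Y,−1) x₁z₁X²YZ. The six-dimensional parametric DNLS map T_{a,b,c}(x₁,X,y₁,Y,z₁,Z) = (u₁,U,v₁,V,w₁,W) with u₁ = f_{b,c}(X,Y,Z)·(f_{b,a}(X,Y,X) f_{b,c}(X,Y,Z) + f_{b,0}(X,Y,−1) x₁z₁X²YZ)/(a c² x₁y₁z₁² X²Y²Z), U = a c x₁y₁z₁ X²Y²/G, v₁ = x₁y₁z₁XYZ f_{b,0}(X,Y,−1)/G, V = G/(a c x₁y₁z₁ XY), w₁ = f_{b,a}(X,Y,X)/(a x₁ XY), W = a c x₁y₁z₁ XY²Z/G admits the invariants I₁ = X/Z, I₂ = XY, and I₃ = Z − bX − aYZ + y₁Y(a−X)(c−Z)/(x₁z₁XZ) − x₁z₁XZ(b−Y)/(y₁Y): i.e. U/W = X/Z, UV = XY, and W − bU − aVW + v₁V(a−U)(c−W)/(u₁w₁UW) − u₁w₁UW(b−V)/(v₁V) = Z − bX − aYZ + y₁Y(a−X)(c−Z)/(x₁z₁XZ)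 − x₁z₁XZ(b−Y)/(y₁Y). -/

import Mathlib

set_option linter.unusedVariables false

/-- `fD b c x1 y1 z1 X Y Z = b x₁z₁XZ + y₁Y(c−Z)`. -/
noncomputable def fD (b c x1 y1 z1 X Y Z : ℂ) : ℂ :=
  b*x1*z1*X*Z + y1*Y*(c - Z)

/-- `G = f_{b,a}(X,Y,X) f_{b,c}(X,Y,Z) + f_{b,0}(X,Y,−1) x₁z₁X²YZ`. -/
noncomputable def Gd (a b c x1 X y1 Y z1 Z : ℂ) : ℂ :=
  fD b a x1 y1 z1 X Y X * fD b c x1 y1 z1 X Y Z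
    + fD b 0 x1 y1 z1 X Y (-1) * x1*z1*X^2*Y*Z

noncomputable def u1f (a b c x1 X y1 Y z1 Z : ℂ) : ℂ :=
  fD b c x1 y1 z1 X Y Z * Gd a b c x1 X y1 Y z1 Z
    /(a*c^2*x1*y1*z1^2*X^2*Y^2*Z)
noncomputable def Uf (a b c x1 X y1 Y z1 Z : ℂ) : ℂ :=
  a*c*x1*y1*z1*X^2*Y^2/(Gd a b c x1 X y1 Y z1 Z)
noncomputable def v1f (a b c x1 X y1 Y z1 Z : ℂ) : ℂ :=
  x1*y1*z1*X*Y*Z*fD b 0 x1 y1 z1 X Y (-1)/(Gd a b c x1 X y1 Y z1 Z)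
noncomputable def Vf (a b c x1 X y1 Y z1 Z : ℂ) : ℂ :=
  Gd a b c x1 X y1 Y z1 Z/(a*c*x1*y1*z1*X*Y)
noncomputable def w1f (a b c x1 X y1 Y z1 Z : ℂ) : ℂ :=
  fD b a x1 y1 z1 X Y X/(a*x1*X*Y)
noncomputable def Wf (a b c x1 X y1 Y z1 Z : ℂ) : ℂ :=
  a*c*x1*y1*z1*X*Y^2*Z/(Gd a b c x1 X y1 Y z1 Z)

/-! `U`, `V` and `W` are monomials divided by `G`, or `G` divided by a monomial, which gives
`I₁` and `I₂` at once.  The variables `x₁, y₁, z₁` enter `I₃` only through `x₁z₁XZ` and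
`y₁Y`; along the map these become `u₁w₁UW = f_{b,c}(X,Y,Z) f_{b,a}(X,Y,X) y₁Y / G` and
`v₁V = f_{b,0}(X,Y,-1) Z / (ac)`, after which clearing denominators
leaves a polynomial identity that holds once `G` is expanded. -/

noncomputable def dnlsI₃ (a b c x1 X y1 Y z1 Z : ℂ) : ℂ :=
  Z - b*X - a*Y*Z + y1*Y*(a - X)*(c - Z)/(x1*z1*X*Z) - x1*z1*X*Z*(b - Y)/(y1*Y)

section
variable {a b c x1 X y1 Y z1 Z : ℂ}

lemma Uf_div_Wf (ha : a ≠ 0) (hc : c ≠ 0) (hx1 : x1 ≠ 0) (hy1 : y1 ≠ 0) (hY : Y ≠ 0)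
    (hz1 : z1 ≠ 0) (hG : Gd a b c x1 X y1 Y z1 Z ≠ 0) :
    Uf a b c x1 X y1 Y z1 Z / Wf a b c x1 X y1 Y z1 Z = X / Z := by
  unfold Uf Wf
  field_simp

lemma Uf_mul_Vf (ha : a ≠ 0) (hc : c ≠ 0) (hx1 : x1 ≠ 0) (hy1 : y1 ≠ 0) (hz1 : z1 ≠ 0)
    (hG : Gd a b c x1 X y1 Y z1 Z ≠ 0) :
    Uf a b c x1 X y1 Y z1 Z * Vf a b c x1 X y1 Y z1 Z = X * Y := by
  unfold Uf Vf
  field_simp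

lemma u1f_mul_w1f_mul_Uf_mul_Wf (ha : a ≠ 0) (hc : c ≠ 0) (hx1 : x1 ≠ 0) (hX : X ≠ 0)
    (hz1 : z1 ≠ 0) (hZ : Z ≠ 0) :
    u1f a b c x1 X y1 Y z1 Z * w1f a b c x1 X y1 Y z1 Z
        * Uf a b c x1 X y1 Y z1 Z * Wf a b c x1 X y1 Y z1 Z
      = fD b c x1 y1 z1 X Y Z * fD b a x1 y1 z1 X Y X * (y1*Y) / Gd a b c x1 X y1 Y z1 Z := by
  unfold u1f w1f Uf Wf
  field_simp

lemma v1f_mul_Vf (hx1 : x1 ≠ 0) (hX : X ≠ 0) (hy1 : y1 ≠ 0) (hY : Y ≠ 0) (hz1 : z1 ≠ 0)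
    (hG : Gd a b c x1 X y1 Y z1 Z ≠ 0) :
    v1f a b c x1 X y1 Y z1 Z * Vf a b c x1 X y1 Y z1 Z = fD b 0 x1 y1 z1 X Y (-1) * Z / (a*c) := by
  unfold v1f Vf
  field_simp

lemma dnlsI₃_map (ha : a ≠ 0) (hc : c ≠ 0) (hx1 : x1 ≠ 0) (hX : X ≠ 0) (hy1 : y1 ≠ 0)
    (hY : Y ≠ 0) (hz1 : z1 ≠ 0) (hZ : Z ≠ 0) (hG : Gd a b c x1 X y1 Y z1 Z ≠ 0)
    (hC : fD b c x1 y1 z1 X Y Z ≠ 0) (hA : fD b a x1 y1 z1 X Y X ≠ 0)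
    (hF : fD b 0 x1 y1 z1 X Y (-1) ≠ 0) :
    dnlsI₃ a b c (u1f a b c x1 X y1 Y z1 Z) (Uf a b c x1 X y1 Y z1 Z) (v1f a b c x1 X y1 Y z1 Z)
        (Vf a b c x1 X y1 Y z1 Z) (w1f a b c x1 X y1 Y z1 Z) (Wf a b c x1 X y1 Y z1 Z)
      = dnlsI₃ a b c x1 X y1 Y z1 Z := by
  unfold dnlsI₃
  rw [u1f_mul_w1f_mul_Uf_mul_Wf ha hc hx1 hX hz1 hZ, v1f_mul_Vf hx1 hX hy1 hY hz1 hG]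
  unfold Uf Vf Wf
  field_simp
  unfold Gd fD
  ring

end

theorem dnls6d_invariants_general (a b c x1 X y1 Y z1 Z : ℂ)
    (ha : a ≠ 0) (hc : c ≠ 0)
    (hx1 : x1 ≠ 0) (hX : X ≠ 0) (hy1 : y1 ≠ 0) (hY : Y ≠ 0)
    (hz1 : z1 ≠ 0) (hZ : Z ≠ 0)
    (hG : Gd a b c x1 X y1 Y z1 Z ≠ 0)
    (hu1 : u1f a b c x1 X y1 Y z1 Z ≠ 0)
    (hv1 : v1f a b c x1 X y1 Y z1 Z ≠ 0)
    (hw1 : w1f a b c x1 X y1 Y z1 Z ≠ 0) :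
    Uf a b c x1 X y1 Y z1 Z / Wf a b c x1 X y1 Y z1 Z = X/Z ∧
    Uf a b c x1 X y1 Y z1 Z * Vf a b c x1 X y1 Y z1 Z = X*Y ∧
    Wf a b c x1 X y1 Y z1 Z - b*Uf a b c x1 X y1 Y z1 Z
      - a*Vf a b c x1 X y1 Y z1 Z*Wf a b c x1 X y1 Y z1 Z
      + v1f a b c x1 X y1 Y z1 Z*Vf a b c x1 X y1 Y z1 Z
        *(a - Uf a b c x1 X y1 Y z1 Z)*(c - Wf a b c x1 X y1 Y z1 Z)
        /(u1f a b c x1 X y1 Y z1 Z*w1f a b c x1 X y1 Y z1 Z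
          *Uf a b c x1 X y1 Y z1 Z*Wf a b c x1 X y1 Y z1 Z)
      - u1f a b c x1 X y1 Y z1 Z*w1f a b c x1 X y1 Y z1 Z
        *Uf a b c x1 X y1 Y z1 Z*Wf a b c x1 X y1 Y z1 Z
        *(b - Vf a b c x1 X y1 Y z1 Z)
        /(v1f a b c x1 X y1 Y z1 Z*Vf a b c x1 X y1 Y z1 Z)
      = Z - b*X - a*Y*Z + y1*Y*(a - X)*(c - Z)/(x1*z1*X*Z)
        - x1*z1*X*Z*(b - Y)/(y1*Y) := by
  have hC : fD b c x1 y1 z1 X Y Z ≠ 0 := left_ne_zero_of_mul (div_ne_zero_iff.mp hu1).1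
  have hF : fD b 0 x1 y1 z1 X Y (-1) ≠ 0 := right_ne_zero_of_mul (div_ne_zero_iff.mp hv1).1
  have hA : fD b a x1 y1 z1 X Y X ≠ 0 := (div_ne_zero_iff.mp hw1).1
  exact ⟨Uf_div_Wf ha hc hx1 hy1 hY hz1 hG, Uf_mul_Vf ha hc hx1 hy1 hz1 hG,
    dnlsI₃_map ha hc hx1 hX hy1 hY hz1 hZ hG hC hA hF⟩

theorem dnls6d_invariants (a b c x1 X y1 Y z1 Z : ℂ)
    (ha : a ≠ 0) (hb : b ≠ 0) (hc : c ≠ 0)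
    (hx1 : x1 ≠ 0) (hX : X ≠ 0) (hy1 : y1 ≠ 0) (hY : Y ≠ 0)
    (hz1 : z1 ≠ 0) (hZ : Z ≠ 0)
    (hG : Gd a b c x1 X y1 Y z1 Z ≠ 0)
    (hu1 : u1f a b c x1 X y1 Y z1 Z ≠ 0)
    (hv1 : v1f a b c x1 X y1 Y z1 Z ≠ 0)
    (hw1 : w1f a b c x1 X y1 Y z1 Z ≠ 0) :
    Uf a b c x1 X y1 Y z1 Z / Wf a b c x1 X y1 Y z1 Z = X/Z ∧
    Uf a b c x1 X y1 Y z1 Z * Vf a b c x1 X y1 Y z1 Z = X*Y ∧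
    Wf a b c x1 X y1 Y z1 Z - b*Uf a b c x1 X y1 Y z1 Z
      - a*Vf a b c x1 X y1 Y z1 Z*Wf a b c x1 X y1 Y z1 Z
      + v1f a b c x1 X y1 Y z1 Z*Vf a b c x1 X y1 Y z1 Z
        *(a - Uf a b c x1 X y1 Y z1 Z)*(c - Wf a b c x1 X y1 Y z1 Z)
        /(u1f a b c x1 X y1 Y z1 Z*w1f a b c x1 X y1 Y z1 Z
          *Uf a b c x1 X y1 Y z1 Z*Wf a b c x1 X y1 Y z1 Z)
      - u1f a b c x1 X y1 Y z1 Z*w1f a b c x1 X y1 Y z1 Z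
        *Uf a b c x1 X y1 Y z1 Z*Wf a b c x1 X y1 Y z1 Z
        *(b - Vf a b c x1 X y1 Y z1 Z)
        /(v1f a b c x1 X y1 Y z1 Z*Vf a b c x1 X y1 Y z1 Z)
      = Z - b*X - a*Y*Z + y1*Y*(a - X)*(c - Z)/(x1*z1*X*Z)
        - x1*z1*X*Z*(b - Y)/(y1*Y) :=
  dnls6d_invariants_general a b c x1 X y1 Y z1 Z ha hc hx1 hX hy1 hY hz1 hZ hG hu1 hv1 hw1
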